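/- For any d ∈ (0, 2k], the plane ℝ² can be tessellated by congruent hexagonal regions of area d(2k - d/2), each contained in the closed ℓ¹-ball of radius k around its designated center, where centers on each vertical line x = j(2k - d/2) are spaced d apart vertically, with alternate columns offset by d/2. -/

import Mathlib

/-! Put `w = 2k - d/2`, the distance between neighbouring columns of centers. Each cell is the
translate to its center of the hexagon `|u| + |v| ≤ k`, `|v| ≤ d/2` (half-open, so that the
translates are disjoint), whose area is `∫ 2(k - |v|) dv = d(2k - d/2)` over `|v| ≤ d/2`.
On the horizontal line at height `y`, column `j` contributes the cell whose center `c` has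
`y - c.2 ∈ [-d/2, d/2)`, and its trace is `[jw - k + |y - c.2|, jw + k - |y - c.2|)`. Neighbouring
columns are shifted by `d/2`, so their offsets satisfy `|y - c.2| + |y - c'.2| = d/2`: the right
end of each trace is the left end of the next, and the traces are the intervals between
consecutive terms of a monotone sequence, which partition the line. -/

open MeasureTheory

def dist1 (p q : ℝ × ℝ) : ℝ := |p.1 - q.1| + |p.2 - q.2|

/-- Center of the cell indexed by `(i, j)`:
`(j·(2k - d/2), i·d + (j mod 2)·d/2)`. -/
noncomputable def center (k d : ℝ) (z : ℤ × ℤ) : ℝ × ℝ :=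
  ((z.2 : ℝ) * (2*k - d/2), (z.1 : ℝ) * d + ((z.2 % 2 : ℤ) : ℝ) * (d/2))

open Set hiding center

theorem abs_add_abs_eq_of_sub_eq_odd_mul {h v v' : ℝ} {m : ℤ} (hm : Odd m)
    (hv : v ∈ Ico (-h) h) (hv' : v' ∈ Ico (-h) h) (hsub : v' - v = m * h) :
    |v| + |v'| = h := by
  obtain ⟨hv₁, hv₂⟩ := hv
  obtain ⟨hv₁', hv₂'⟩ := hv'
  have hh : 0 < h := by linarith
  have hm_lt : (m : ℝ) < 2 := lt_of_mul_lt_mul_right (a := h) (by linarith) hh.le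
  have hm_gt : (-2 : ℝ) < m := lt_of_mul_lt_mul_right (a := h) (by linarith) hh.le
  norm_cast at hm_lt hm_gt
  obtain ⟨r, rfl⟩ := hm
  obtain rfl | rfl : r = 0 ∨ r = -1 := by omega
  all_goals push_cast at hsub; cases abs_cases v <;> cases abs_cases v' <;> linarith

theorem Monotone.existsUnique_mem_Ico_succ {β : Type*} [LinearOrder β] {f : ℤ → β}
    (hf : Monotone f) (hbot : ∀ x, ∃ j, f j ≤ x) (htop : ∀ x, ∃ j, x < f j) (x : β) :
    ∃! j, x ∈ Ico (f j) (f (j + 1)) := by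
  classical
  obtain ⟨a, ha⟩ := hbot x
  obtain ⟨b, hb⟩ := htop x
  obtain ⟨j, hj, hmax⟩ := Int.exists_greatest_of_bdd (P := fun j => f j ≤ x)
    ⟨b, fun j hj => (hf.reflect_lt (hj.trans_lt hb)).le⟩ ⟨a, ha⟩
  refine ⟨j, ⟨hj, lt_of_not_ge fun h => by have := hmax _ h; omega⟩, ?_⟩
  rintro j' ⟨hj'₁, hj'₂⟩
  refine le_antisymm (hmax _ hj'₁) (not_lt.mp fun h => ?_)
  exact absurd ((hf (Int.add_one_le_of_lt h)).trans hj) (not_le.mpr hj'₂)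

theorem intervalIntegral_abs_symm (c : ℝ) (hc : 0 ≤ c) : ∫ v in -c..c, |v| = c ^ 2 := by
  have h_half : ∫ v in (0 : ℝ)..c, |v| = c ^ 2 / 2 := by
    rw [intervalIntegral.integral_congr (g := fun v => v) fun v hv => abs_of_nonneg (by
      rw [uIcc_of_le hc] at hv; exact hv.1), integral_id]
    ring
  have h_neg : ∫ v in -c..0, |v| = ∫ v in (0 : ℝ)..c, |v| := by
    simpa using (intervalIntegral.integral_comp_neg (a := 0) (b := c) (fun v => |v|)).symm
  rw [← intervalIntegral.integral_add_adjacent_intervals (b := 0)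
    (continuous_abs.intervalIntegrable _ _) (continuous_abs.intervalIntegrable _ _), h_neg, h_half]
  ring

def hexagon (k d : ℝ) : Set (ℝ × ℝ) :=
  {q | q.2 ∈ Ico (-(d/2)) (d/2) ∧ q.1 ∈ Ico (|q.2| - k) (k - |q.2|)}

def hexCell (k d : ℝ) (z : ℤ × ℤ) : Set (ℝ × ℝ) :=
  (· - center k d z) ⁻¹' hexagon k d

theorem hexagon_subset (k d : ℝ) : hexagon k d ⊆ {q | |q.1| + |q.2| ≤ k} := by
  rintro q ⟨-, hq₁, hq₂⟩
  exact show |q.1| + |q.2| ≤ k by linarith [abs_le.mpr ⟨by linarith, hq₂.le⟩]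

theorem hexCell_subset (k d : ℝ) (z : ℤ × ℤ) :
    hexCell k d z ⊆ {p | dist1 p (center k d z) ≤ k} :=
  fun _ hp => hexagon_subset k d hp

section Columns

variable {k d : ℝ} (hd : 0 < d)

noncomputable def rowIndex (j : ℤ) (y : ℝ) : ℤ :=
  toIcoDiv hd (-(d/2)) (y - ((j % 2 : ℤ) : ℝ) * (d/2))

theorem rowIndex_eq_iff {i j : ℤ} {y : ℝ} :
    rowIndex hd j y = i ↔ y - (center k d (i, j)).2 ∈ Ico (-(d/2)) (d/2) := by
  have h : y - ((j % 2 : ℤ) : ℝ) * (d/2) - i • d = y - (center k d (i, j)).2 := by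
    simp only [center, zsmul_eq_mul]; ring
  rw [rowIndex, toIcoDiv_eq_iff, h, show -(d/2) + d = d/2 by ring]

noncomputable def columnCenter (k : ℝ) (j : ℤ) (y : ℝ) : ℝ × ℝ :=
  center k d (rowIndex hd j y, j)

theorem sub_columnCenter_mem_Ico (j : ℤ) (y : ℝ) :
    y - (columnCenter hd k j y).2 ∈ Ico (-(d/2)) (d/2) :=
  (rowIndex_eq_iff hd).mp rfl

theorem abs_sub_columnCenter_add_abs_sub_columnCenter_succ (j : ℤ) (y : ℝ) :
    |y - (columnCenter hd k j y).2| + |y - (columnCenter hd k (j + 1) y).2| = d/2 :=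
  abs_add_abs_eq_of_sub_eq_odd_mul
    (m := 2 * (rowIndex hd j y - rowIndex hd (j + 1) y) + (j % 2 - (j + 1) % 2))
    (Int.odd_iff.mpr (by omega)) (sub_columnCenter_mem_Ico hd j y)
    (sub_columnCenter_mem_Ico hd (j + 1) y)
    (by simp only [columnCenter, center]; push_cast; ring)

theorem columnCenter_fst (j : ℤ) (y : ℝ) :
    (columnCenter hd k j y).1 = j * (2 * k - d/2) := rfl

theorem abs_sub_columnCenter_le (j : ℤ) (y : ℝ) : |y - (columnCenter hd k j y).2| ≤ d/2 :=
  have hv := sub_columnCenter_mem_Ico hd (k := k) j y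
  abs_le.mpr ⟨hv.1, hv.2.le⟩

noncomputable def traceLeft (k : ℝ) (y : ℝ) (j : ℤ) : ℝ :=
  (columnCenter hd k j y).1 - (k - |y - (columnCenter hd k j y).2|)

theorem traceLeft_succ (y : ℝ) (j : ℤ) :
    traceLeft hd k y (j + 1) =
      (columnCenter hd k j y).1 + (k - |y - (columnCenter hd k j y).2|) := by
  have := abs_sub_columnCenter_add_abs_sub_columnCenter_succ hd (k := k) j y
  rw [traceLeft, columnCenter_fst, columnCenter_fst]
  push_cast
  linarith

theorem traceLeft_mem_Icc (y : ℝ) (j : ℤ) :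
    traceLeft hd k y j ∈ Icc (j * (2 * k - d/2) - k) (j * (2 * k - d/2) - k + d/2) := by
  have := abs_sub_columnCenter_le hd (k := k) j y
  rw [traceLeft, columnCenter_fst]
  constructor <;> linarith [abs_nonneg (y - (columnCenter hd k j y).2)]

theorem mem_hexCell_iff {i j : ℤ} {x y : ℝ} :
    (x, y) ∈ hexCell k d (i, j) ↔
      rowIndex hd j y = i ∧ x ∈ Ico (traceLeft hd k y j) (traceLeft hd k y (j + 1)) := by
  simp only [hexCell, hexagon, mem_preimage, mem_ofPred_eq, Prod.fst_sub, Prod.snd_sub,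
    ← rowIndex_eq_iff hd, traceLeft_succ]
  constructor <;> rintro ⟨rfl, hx⟩ <;> refine ⟨rfl, ?_⟩ <;>
    simp only [traceLeft, columnCenter, mem_Ico] at hx ⊢ <;> constructor <;> linarith [hx.1, hx.2]

variable (hdk : d ≤ 2 * k)
include hd hdk

theorem traceLeft_monotone (y : ℝ) : Monotone (traceLeft hd k y) := by
  refine monotone_int_of_le_succ fun j => ?_
  have := abs_sub_columnCenter_le hd (k := k) j y
  rw [traceLeft_succ, traceLeft]
  linarith

theorem existsUnique_mem_hexCell (p : ℝ × ℝ) : ∃! z, p ∈ hexCell k d z := by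
  obtain ⟨x, y⟩ := p
  have hw : 0 < 2 * k - d/2 := by linarith
  have hbot (t : ℝ) : ∃ j, traceLeft hd k y j ≤ t := by
    obtain ⟨j, hj⟩ := exists_int_lt ((t + k - d/2) / (2 * k - d/2))
    exact ⟨j, by linarith [(traceLeft_mem_Icc hd (k := k) y j).2, (lt_div_iff₀ hw).mp hj]⟩
  have htop (t : ℝ) : ∃ j, t < traceLeft hd k y j := by
    obtain ⟨j, hj⟩ := exists_int_gt ((t + k) / (2 * k - d/2))
    exact ⟨j, by linarith [(traceLeft_mem_Icc hd (k := k) y j).1, (div_lt_iff₀ hw).mp hj]⟩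
  obtain ⟨j, hj, hj_unique⟩ := (traceLeft_monotone hd hdk y).existsUnique_mem_Ico_succ hbot htop x
  refine ⟨(rowIndex hd j y, j), (mem_hexCell_iff hd).mpr ⟨rfl, hj⟩, ?_⟩
  rintro ⟨i', j'⟩ h
  obtain ⟨rfl, hj'⟩ := (mem_hexCell_iff hd).mp h
  rw [hj_unique j' hj']

end Columns

theorem measurableSet_hexagon (k d : ℝ) : MeasurableSet (hexagon k d) := by
  refine (measurable_snd measurableSet_Ico).inter ?_
  exact (measurableSet_le (by fun_prop) measurable_fst).inter
    (measurableSet_lt measurable_fst (by fun_prop))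

theorem volume_hexagon_slice (k d v : ℝ) :
    volume ((·, v) ⁻¹' hexagon k d) =
      (Ico (-(d/2)) (d/2)).indicator (fun v => ENNReal.ofReal (2 * (k - |v|))) v := by
  by_cases hv : v ∈ Ico (-(d/2)) (d/2)
  · have : (·, v) ⁻¹' hexagon k d = Ico (|v| - k) (k - |v|) := by
      ext u; simp only [hexagon, mem_preimage, mem_ofPred_eq, and_iff_right hv]
    rw [indicator_of_mem hv, this, Real.volume_Ico]
    ring_nf
  · have : (·, v) ⁻¹' hexagon k d = ∅ := by
      ext u; simp only [hexagon, mem_preimage, mem_ofPred_eq, mem_empty_iff_false, iff_false]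
      exact fun h => hv h.1
    rw [indicator_of_notMem hv, this, measure_empty]

theorem volume_hexagon {k d : ℝ} (hd : 0 ≤ d) (hdk : d ≤ 2 * k) :
    volume (hexagon k d) = ENNReal.ofReal (d * (2 * k - d/2)) := by
  have h_cont : Continuous fun v : ℝ => 2 * (k - |v|) := by fun_prop
  have h_nonneg : 0 ≤ᵐ[volume.restrict (Ico (-(d/2)) (d/2))] fun v => 2 * (k - |v|) := by
    refine (ae_restrict_iff' measurableSet_Ico).mpr (.of_forall fun v hv => ?_)
    have := abs_le.mpr ⟨hv.1, hv.2.le⟩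
    show 0 ≤ 2 * (k - |v|)
    linarith
  rw [Measure.volume_eq_prod, Measure.prod_apply_symm (measurableSet_hexagon k d)]
  simp_rw [volume_hexagon_slice]
  rw [lintegral_indicator measurableSet_Ico, ← ofReal_integral_eq_lintegral_ofReal
    (h_cont.integrableOn_Icc.mono_set Ico_subset_Icc_self) h_nonneg,
    integral_Ico_eq_integral_Ioo, ← integral_Ioc_eq_integral_Ioo,
    ← intervalIntegral.integral_of_le (by linarith), intervalIntegral.integral_const_mul,
    intervalIntegral.integral_sub intervalIntegrable_const (continuous_abs.intervalIntegrable _ _),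
    intervalIntegral.integral_const, intervalIntegral_abs_symm (d/2) (by linarith)]
  congr 1
  simp only [smul_eq_mul]
  ring

theorem volume_hexCell {k d : ℝ} (hd : 0 ≤ d) (hdk : d ≤ 2 * k) (z : ℤ × ℤ) :
    volume (hexCell k d z) = ENNReal.ofReal (d * (2 * k - d/2)) := by
  rw [hexCell, ← volume_hexagon hd hdk]
  simp only [sub_eq_add_neg]
  exact measure_preimage_add_right _ _ _

theorem stmt18_general (k d : ℝ) (hd1 : 0 < d) (hd2 : d ≤ 2*k) :
    ∃ cell : ℤ × ℤ → Set (ℝ × ℝ),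
      (⋃ z, cell z) = Set.univ ∧
      (∀ z w : ℤ × ℤ, z ≠ w → Disjoint (cell z) (cell w)) ∧
      ∀ z : ℤ × ℤ,
        volume (cell z) = ENNReal.ofReal (d*(2*k - d/2)) ∧
        cell z ⊆ {p : ℝ × ℝ | dist1 p (center k d z) ≤ k} := by
  have h_unique := existsUnique_mem_hexCell hd1 hd2
  refine ⟨hexCell k d, ?_, ?_, fun z => ⟨volume_hexCell hd1.le hd2 z, hexCell_subset k d z⟩⟩
  · exact eq_univ_of_forall fun p => mem_iUnion.mpr (h_unique p).exists
  · exact fun z w hzw => disjoint_left.mpr fun p hz hw => hzw ((h_unique p).unique hz hw)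

theorem stmt18 (k d : ℝ) (hk : 0 < k) (hd1 : 0 < d) (hd2 : d ≤ 2*k) :
    ∃ cell : ℤ × ℤ → Set (ℝ × ℝ),
      (⋃ z, cell z) = Set.univ ∧
      (∀ z w : ℤ × ℤ, z ≠ w → Disjoint (cell z) (cell w)) ∧
      ∀ z : ℤ × ℤ,
        volume (cell z) = ENNReal.ofReal (d*(2*k - d/2)) ∧
        cell z ⊆ {p : ℝ × ℝ | dist1 p (center k d z) ≤ k} :=
  stmt18_general k d hd1 hd2
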